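/- In the ring R = Z[v][y1, y2] / (p^2*y1 + v*(p*y1 + v*y1^p)^p, p^2*y2 + v*(p*y2 + v*y2^p)^p), the element y2*[p^2](y1) - y1*[p^2](y2) vanishes, and expanding gives the relation p*v*(y1^p*y2 - y1*y2^p) + v^(p+1)*(y1^(p^2)*y2 - y1*y2^(p^2)) + (higher terms divisible by p^2*v) = 0; in particular, modulo the ideal (p^2), one has p*v*y(1) + v^(p+1)*y(2) = 0 where y(i) = y1^(p^i)*y2 - y1*y2^(p^i). -/
import Mathlib

lemma key {A : Type*} [CommRing A] (p : ℕ) (hp : p.Prime) (b t : A) :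
    ((p:A)^2) ∣ (b + (p:A)*t)^p - b^p := by
  rw [add_pow, Finset.sum_range_succ]
  simp only [Nat.choose_self, Nat.cast_one, mul_one, Nat.sub_self, pow_zero]
  rw [add_sub_cancel_right]
  apply Finset.dvd_sum
  intro k hk
  rw [Finset.mem_range] at hk
  rcases Nat.eq_zero_or_pos k with h0 | h1
  · subst h0
    simp only [pow_zero, one_mul, Nat.choose_zero_right, Nat.cast_one, mul_one, Nat.sub_zero]
    rw [mul_pow]
    exact Dvd.dvd.mul_right (pow_dvd_pow _ hp.two_le) _
  · have hc : (p:A) ∣ (p.choose k : A) := Nat.cast_dvd_cast (hp.dvd_choose_self h1.ne' hk)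
    have hpt : (p:A) ∣ ((p:A)*t)^(p-k) :=
      dvd_pow (dvd_mul_right _ _) (Nat.sub_ne_zero_of_lt hk)
    rw [mul_assoc, pow_two]
    exact Dvd.dvd.mul_left (mul_dvd_mul hpt hc) _

open MvPolynomial

theorem stmt2 (p : ℕ) (hp : p.Prime) :
    let R := MvPolynomial (Fin 3) ℤ
    let v : R := X 0
    let y1 : R := X 1
    let y2 : R := X 2
    let P : R → R := fun t =>
      (p : R) * ((p : R) * t + v * t ^ p) + v * ((p : R) * t + v * t ^ p) ^ p
    let Y1 : R := y1 ^ p * y2 - y1 * y2 ^ p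
    let Y2 : R := y1 ^ (p ^ 2) * y2 - y1 * y2 ^ (p ^ 2)
    let I : Ideal R := Ideal.span {P y1, P y2}
    Ideal.Quotient.mk I (y2 * P y1 - y1 * P y2) = 0
    ∧ (∃ E : R, y2 * P y1 - y1 * P y2 = (p : R) * v * Y1 + v ^ (p + 1) * Y2 + E
        ∧ ((p : R) ^ 2 * v) ∣ E)
    ∧ Ideal.Quotient.mk (I ⊔ Ideal.span {((p : R) ^ 2)})
        ((p : R) * v * Y1 + v ^ (p + 1) * Y2) = 0 := by
  intro R v y1 y2 P Y1 Y2 I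
  have h1mem : P y1 ∈ I := Ideal.subset_span (Set.mem_insert _ _)
  have h2mem : P y2 ∈ I := Ideal.subset_span (Set.mem_insert_of_mem _ rfl)
  have hImem : y2 * P y1 - y1 * P y2 ∈ I :=
    Ideal.sub_mem _ (Ideal.mul_mem_left _ _ h1mem) (Ideal.mul_mem_left _ _ h2mem)
  obtain ⟨q1, hq1⟩ := key p hp (v * y1 ^ p) y1
  obtain ⟨q2, hq2⟩ := key p hp (v * y2 ^ p) y2
  have hEeq : y2 * P y1 - y1 * P y2
      = (p : R) * v * Y1 + v ^ (p + 1) * Y2 + (p : R) ^ 2 * v * (y2 * q1 - y1 * q2) := by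
    simp only [P, Y1, Y2]
    linear_combination v * y2 * hq1 - v * y1 * hq2
  refine ⟨(Ideal.Quotient.eq_zero_iff_mem).mpr hImem,
    ⟨(p : R) ^ 2 * v * (y2 * q1 - y1 * q2), hEeq, Dvd.intro _ rfl⟩, ?_⟩
  rw [Ideal.Quotient.eq_zero_iff_mem]
  have hE2 : (p : R) ^ 2 * v * (y2 * q1 - y1 * q2) ∈ Ideal.span {((p : R) ^ 2)} := by
    rw [mul_assoc]
    exact Ideal.mul_mem_right _ _ (Ideal.subset_span rfl)
  have : (p : R) * v * Y1 + v ^ (p + 1) * Y2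
      = (y2 * P y1 - y1 * P y2) - (p : R) ^ 2 * v * (y2 * q1 - y1 * q2) := by
    rw [hEeq]; ring
  rw [this]
  exact Ideal.sub_mem _ (Ideal.mem_sup_left hImem) (Ideal.mem_sup_right hE2)
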